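/- arXiv:2305.05769 — 2 statements merged into one kernel-verified Lean document; each statement's English description precedes it below -/
import Mathlib

section
/- Let U = (ρ, m, E) with ρ > 0, and define the limited state Ũ(θ) = θ(Û - Ū) + Ū where Û and Ū both have positive density and Ū satisfies ρe(Ū) ≥ ε > 0. If θ = min{1, (ρe(Ū) - ε)/(ρe(Ū) - min_x ρe(Û(x)))} when min_x ρe(Û(x)) < ε, then for concave ρe, the limited state satisfies ρe(Ũ(x)) ≥ ε at every point x in the finite set over which the minimum is taken. -/
/-!
The internal energy `ρe(ρ, m, E) = E - ‖m‖² / (2ρ)` is concave on `ρ > 0`: it is a linear function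
minus half the perspective `‖m‖² / ρ` of the squared norm. Hence
`ρe(Ũ) ≥ θ ρe(Û) + (1 - θ) ρe(Ū) ≥ θ min ρe(Û) + (1 - θ) ρe(Ū)`, and `θ` is chosen precisely so
that the last convex combination is at least `ε`.
-/

theorem sq_add_div_le_add_sq_div {x₁ x₂ t₁ t₂ a b : ℝ} (ha : 0 ≤ a) (hb : 0 ≤ b)
    (ht₁ : 0 < t₁) (ht₂ : 0 < t₂) (ht : 0 < a * t₁ + b * t₂) :
    (a * x₁ + b * x₂) ^ 2 / (a * t₁ + b * t₂) ≤ a * (x₁ ^ 2 / t₁) + b * (x₂ ^ 2 / t₂) := by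
  have gap : (a * (x₁ ^ 2 / t₁) + b * (x₂ ^ 2 / t₂)) * (a * t₁ + b * t₂) - (a * x₁ + b * x₂) ^ 2
      = a * b * (x₁ * t₂ - x₂ * t₁) ^ 2 / (t₁ * t₂) := by
    field_simp
    ring
  have : 0 ≤ a * b * (x₁ * t₂ - x₂ * t₁) ^ 2 / (t₁ * t₂) := by positivity
  rw [div_le_iff₀ ht]
  linarith

theorem convexOn_norm_sq_div {E : Type*} [SeminormedAddCommGroup E] [NormedSpace ℝ E] :
    ConvexOn ℝ {p : ℝ × E | 0 < p.1} (fun p => ‖p.2‖ ^ 2 / p.1) := by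
  have hconvex : Convex ℝ {p : ℝ × E | 0 < p.1} :=
    convex_halfSpace_gt (LinearMap.fst ℝ ℝ E).isLinear 0
  refine ⟨hconvex, ?_⟩
  rintro ⟨t₁, m₁⟩ ht₁ ⟨t₂, m₂⟩ ht₂ a b ha hb hab
  have ht : 0 < a * t₁ + b * t₂ := by simpa using hconvex ht₁ ht₂ ha hb hab
  have hnorm : ‖a • m₁ + b • m₂‖ ≤ a * ‖m₁‖ + b * ‖m₂‖ := by
    simpa [norm_smul, abs_of_nonneg ha, abs_of_nonneg hb] using norm_add_le (a • m₁) (b • m₂)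
  calc ‖a • m₁ + b • m₂‖ ^ 2 / (a * t₁ + b * t₂)
      ≤ (a * ‖m₁‖ + b * ‖m₂‖) ^ 2 / (a * t₁ + b * t₂) := by gcongr
    _ ≤ a * (‖m₁‖ ^ 2 / t₁) + b * (‖m₂‖ ^ 2 / t₂) :=
      sq_add_div_le_add_sq_div ha hb ht₁ ht₂ ht

theorem concaveOn_internalEnergy {E : Type*} [SeminormedAddCommGroup E] [NormedSpace ℝ E] :
    ConcaveOn ℝ {U : ℝ × E × ℝ | 0 < U.1} (fun U => U.2.2 - ‖U.2.1‖ ^ 2 / (2 * U.1)) := by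
  let densityMomentum : ℝ × E × ℝ →ₗ[ℝ] ℝ × E :=
    (LinearMap.fst ℝ ℝ (E × ℝ)).prod (LinearMap.fst ℝ E ℝ ∘ₗ LinearMap.snd ℝ ℝ (E × ℝ))
  let energy : ℝ × E × ℝ →ₗ[ℝ] ℝ := LinearMap.snd ℝ E ℝ ∘ₗ LinearMap.snd ℝ ℝ (E × ℝ)
  have hkinetic := (convexOn_norm_sq_div.comp_linearMap densityMomentum).smul (c := (2 : ℝ)⁻¹)
    (by norm_num)
  refine ((energy.concaveOn hkinetic.1).sub hkinetic).congr fun U _ => ?_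
  simp only [LinearMap.coe_comp, LinearMap.coe_snd, Function.comp_apply, LinearMap.prod_apply,
    LinearMap.coe_fst, Function.prod_apply, smul_eq_mul, Pi.sub_apply, sub_right_inj, energy,
    densityMomentum]
  ring

/-- `r` stands for `ρe(Ū)` and `m` for the minimum of `ρe` over the quadrature points. -/
noncomputable def limiterScale (ε r m : ℝ) : ℝ :=
  if m < ε then min 1 ((r - ε) / (r - m)) else 1

theorem limiterScale_le_one (ε r m : ℝ) : limiterScale ε r m ≤ 1 := by
  unfold limiterScale
  split_ifs
  exacts [min_le_left _ _, le_rfl]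

theorem limiterScale_nonneg {ε r m : ℝ} (hr : ε ≤ r) : 0 ≤ limiterScale ε r m := by
  unfold limiterScale
  split_ifs with hm
  · exact le_min zero_le_one (div_nonneg (by linarith) (by linarith))
  · exact zero_le_one

theorem le_limiterScale_mul_add {ε r m : ℝ} (hr : ε ≤ r) :
    ε ≤ limiterScale ε r m * m + (1 - limiterScale ε r m) * r := by
  unfold limiterScale
  split_ifs with hm
  · have hgap : 0 < r - m := by linarith
    have hθ : min 1 ((r - ε) / (r - m)) * (r - m) ≤ r - ε :=
      (le_div_iff₀ hgap).1 (min_le_right _ _)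
    linarith
  · linarith

theorem zhang_shu_energy_limiter_general (d : ℕ) (ι : Type*) [Fintype ι] [Nonempty ι]
    (ε : ℝ)
    (Ubar : ℝ × EuclideanSpace ℝ (Fin d) × ℝ)
    (Uhat : ι → ℝ × EuclideanSpace ℝ (Fin d) × ℝ)
    (ρe : (ℝ × EuclideanSpace ℝ (Fin d) × ℝ) → ℝ)
    (hρe : ρe = fun U => U.2.2 - ‖U.2.1‖ ^ 2 / (2 * U.1))
    (hbar : 0 < Ubar.1) (hhat : ∀ x, 0 < (Uhat x).1)
    (hbarε : ε ≤ ρe Ubar)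
    (m : ℝ) (hm : m = Finset.univ.inf' Finset.univ_nonempty (fun x => ρe (Uhat x)))
    (θ : ℝ)
    (hθ : θ = if m < ε then min 1 ((ρe Ubar - ε) / (ρe Ubar - m)) else 1) :
    ∀ x, ε ≤ ρe (θ • (Uhat x - Ubar) + Ubar) := by
  intro x
  have hθ0 : 0 ≤ θ := hθ ▸ limiterScale_nonneg hbarε
  have hθ1 : θ ≤ 1 := hθ ▸ limiterScale_le_one ε (ρe Ubar) m
  have hmx : m ≤ ρe (Uhat x) := hm ▸ Finset.inf'_le _ (Finset.mem_univ x)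
  have hconc : ConcaveOn ℝ {U | 0 < U.1} ρe := hρe ▸ concaveOn_internalEnergy
  calc ε ≤ θ * m + (1 - θ) * ρe Ubar := hθ ▸ le_limiterScale_mul_add hbarε
    _ ≤ θ * ρe (Uhat x) + (1 - θ) * ρe Ubar := by gcongr
    _ ≤ ρe (θ • Uhat x + (1 - θ) • Ubar) :=
      hconc.2 (hhat x) hbar hθ0 (sub_nonneg.2 hθ1) (add_sub_cancel _ _)
    _ = ρe (θ • (Uhat x - Ubar) + Ubar) := by congr 1; module

theorem zhang_shu_energy_limiter (d : ℕ) (ι : Type*) [Fintype ι] [Nonempty ι]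
    (ε : ℝ) (hε : 0 < ε)
    (Ubar : ℝ × EuclideanSpace ℝ (Fin d) × ℝ)
    (Uhat : ι → ℝ × EuclideanSpace ℝ (Fin d) × ℝ)
    (ρe : (ℝ × EuclideanSpace ℝ (Fin d) × ℝ) → ℝ)
    (hρe : ρe = fun U => U.2.2 - ‖U.2.1‖ ^ 2 / (2 * U.1))
    (hbar : 0 < Ubar.1) (hhat : ∀ x, 0 < (Uhat x).1)
    (hbarε : ε ≤ ρe Ubar)
    (m : ℝ) (hm : m = Finset.univ.inf' Finset.univ_nonempty (fun x => ρe (Uhat x)))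
    (θ : ℝ)
    (hθ : θ = if m < ε then min 1 ((ρe Ubar - ε) / (ρe Ubar - m)) else 1) :
    ∀ x, ε ≤ ρe (θ • (Uhat x - Ubar) + Ubar) :=
  zhang_shu_energy_limiter_general d ι ε Ubar Uhat ρe hρe hbar hhat hbarε m hm θ hθ
end

section
/- Let A_D be the 1D Q¹ IIPG stiffness matrix as above with penalty σ̃ > 1/2, and let A_M be a diagonal matrix with strictly positive diagonal entries. Then for any Δt > 0, the matrix A_M + Δt·A_D is invertible and its inverse has all nonnegative entries. -/
/-!
A matrix whose off-diagonal entries are nonpositive and whose row sums are positive satisfies a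
discrete maximum principle: if `A x ≥ 0`, then at a minimum `x k` of `x` one has
`0 ≤ (A x)_k ≤ (∑ⱼ A k j) x k`, so `x k ≥ 0`. Applied to `±x` this gives injectivity, and applied
to the columns of `A⁻¹` it gives `A⁻¹ ≥ 0`. For `A_M + Δt A_D` the sign pattern holds because
`σ > 1/2` makes every off-diagonal entry of the IIPG matrix nonpositive, and the row sums are those
of `A_M`, since the IIPG rows sum to zero.
-/

/-- The 1D `Q¹` IIPG stiffness matrix on a uniform mesh of `N` cells (`2N` degrees of
freedom), with mesh size `dx` and interior penalty parameter `σ`, Neumann boundary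
conditions, evaluated with 2-point Gauss–Lobatto quadrature. -/
noncomputable def iipg1D (N : ℕ) (dx σ : ℝ) : Matrix (Fin (2 * N)) (Fin (2 * N)) ℝ :=
  fun i j =>
    if i.val = 0 then
      (if j.val = 0 then 1 / dx else if j.val = 1 then -(1 / dx) else 0)
    else if i.val = 2 * N - 1 then
      (if j.val = 2 * N - 1 then 1 / dx else if j.val = 2 * N - 2 then -(1 / dx) else 0)
    else if i.val % 2 = 1 then
      (if j.val + 1 = i.val then -(1 / (2 * dx))
       else if j.val = i.val then (1 + 2 * σ) / (2 * dx)
       else if j.val = i.val + 1 then (1 - 2 * σ) / (2 * dx)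
       else if j.val = i.val + 2 then -(1 / (2 * dx)) else 0)
    else
      (if j.val + 2 = i.val then -(1 / (2 * dx))
       else if j.val + 1 = i.val then (1 - 2 * σ) / (2 * dx)
       else if j.val = i.val then (1 + 2 * σ) / (2 * dx)
       else if j.val = i.val + 1 then -(1 / (2 * dx)) else 0)

namespace Matrix

variable {ι R K : Type*} [Fintype ι]

theorem nonneg_of_mulVec_nonneg_of_offDiag_nonpos [Ring R] [LinearOrder R]
    [IsStrictOrderedRing R] {A : Matrix ι ι R} (hoff : ∀ i j, i ≠ j → A i j ≤ 0)
    (hrow : ∀ i, 0 < ∑ j, A i j) {x : ι → R} (hx : 0 ≤ A *ᵥ x) : 0 ≤ x := by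
  intro i
  obtain ⟨k, -, hk⟩ := Finset.exists_min_image Finset.univ x ⟨i, Finset.mem_univ i⟩
  suffices 0 ≤ x k from this.trans (hk i (Finset.mem_univ i))
  by_contra! hneg
  have hle : (A *ᵥ x) k ≤ (∑ j, A k j) * x k := by
    rw [Finset.sum_mul]
    refine Finset.sum_le_sum fun j _ => ?_
    rcases eq_or_ne k j with rfl | hkj
    · exact le_rfl
    · exact mul_le_mul_of_nonpos_left (hk j (Finset.mem_univ j)) (hoff k j hkj)
  exact (hle.trans_lt (mul_neg_of_pos_of_neg (hrow k) hneg)).not_ge (hx k)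

theorem isUnit_and_inv_nonneg_of_offDiag_nonpos [DecidableEq ι] [Field K] [LinearOrder K]
    [IsStrictOrderedRing K] {A : Matrix ι ι K} (hoff : ∀ i j, i ≠ j → A i j ≤ 0)
    (hrow : ∀ i, 0 < ∑ j, A i j) : IsUnit A ∧ ∀ i j, 0 ≤ A⁻¹ i j := by
  have hdet : IsUnit A.det := by
    rw [isUnit_iff_ne_zero, Ne, ← exists_mulVec_eq_zero_iff]
    rintro ⟨v, hv, hAv⟩
    have hpos := nonneg_of_mulVec_nonneg_of_offDiag_nonpos hoff hrow hAv.ge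
    have hneg := nonneg_of_mulVec_nonneg_of_offDiag_nonpos hoff hrow
      (x := -v) (by rw [mulVec_neg, hAv, neg_zero])
    exact hv (le_antisymm (neg_nonneg.mp hneg) hpos)
  refine ⟨(isUnit_iff_isUnit_det A).mpr hdet, fun i j => ?_⟩
  have hcol : A *ᵥ (A⁻¹ *ᵥ Pi.single j 1) = Pi.single j 1 := by
    rw [mulVec_mulVec, mul_nonsing_inv A hdet, one_mulVec]
  have := nonneg_of_mulVec_nonneg_of_offDiag_nonpos hoff hrow
    (hcol ▸ Pi.single_nonneg.mpr zero_le_one) i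
  rwa [mulVec_single_one] at this

end Matrix

theorem Fin.sum_ite_val_eq {M : Type*} [AddCommMonoid M] {n v : ℕ} (hv : v < n) (x : M) :
    ∑ j : Fin n, (if (j : ℕ) = v then x else 0) = x := by
  rw [Fin.sum_univ_eq_sum_range (fun j => if j = v then x else 0), Finset.sum_ite_eq',
    if_pos (Finset.mem_range.mpr hv)]

theorem iipg1D_apply_nonpos_of_ne {N : ℕ} {dx σ : ℝ} (hdx : 0 < dx) (hσ : 1 / 2 < σ)
    {i j : Fin (2 * N)} (hij : i ≠ j) : iipg1D N dx σ i j ≤ 0 := by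
  have hv : (i : ℕ) ≠ j := Fin.val_ne_of_ne hij
  have h₁ : -(1 / dx) ≤ 0 := by simp [hdx.le]
  have h₂ : -(1 / (2 * dx)) ≤ 0 := by simp [hdx.le]
  have h₃ : (1 - 2 * σ) / (2 * dx) ≤ 0 := div_nonpos_of_nonpos_of_nonneg (by linarith) (by linarith)
  unfold iipg1D
  split_ifs <;> first | exact le_rfl | assumption | omega

theorem iipg1D_row_sum_eq_zero (N : ℕ) (dx σ : ℝ) (i : Fin (2 * N)) : ∑ j, iipg1D N dx σ i j = 0 := by
  have hi := i.isLt
  rcases eq_or_ne (i : ℕ) 0 with h₀ | h₀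
  · rw [Finset.sum_congr rfl (g := fun j : Fin (2 * N) =>
        (if (j : ℕ) = 0 then 1 / dx else 0) + (if (j : ℕ) = 1 then -(1 / dx) else 0))
      fun j _ => by unfold iipg1D; split_ifs <;> first | ring1 | omega]
    rw [Finset.sum_add_distrib, Fin.sum_ite_val_eq (by omega), Fin.sum_ite_val_eq (by omega)]
    ring
  rcases eq_or_ne (i : ℕ) (2 * N - 1) with h₁ | h₁
  · rw [Finset.sum_congr rfl (g := fun j : Fin (2 * N) =>
        (if (j : ℕ) = 2 * N - 1 then 1 / dx else 0) +
          (if (j : ℕ) = 2 * N - 2 then -(1 / dx) else 0))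
      fun j _ => by unfold iipg1D; split_ifs <;> first | ring1 | omega]
    rw [Finset.sum_add_distrib, Fin.sum_ite_val_eq (by omega), Fin.sum_ite_val_eq (by omega)]
    ring
  rcases Nat.mod_two_eq_zero_or_one i with heven | hodd
  · rw [Finset.sum_congr rfl (g := fun j : Fin (2 * N) =>
        (if (j : ℕ) = i - 2 then -(1 / (2 * dx)) else 0) +
          (if (j : ℕ) = i - 1 then (1 - 2 * σ) / (2 * dx) else 0) +
          (if (j : ℕ) = i then (1 + 2 * σ) / (2 * dx) else 0) +
          (if (j : ℕ) = i + 1 then -(1 / (2 * dx)) else 0))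
      fun j _ => by unfold iipg1D; split_ifs <;> first | ring1 | omega]
    simp only [Finset.sum_add_distrib]
    rw [Fin.sum_ite_val_eq (by omega), Fin.sum_ite_val_eq (by omega),
      Fin.sum_ite_val_eq (by omega), Fin.sum_ite_val_eq (by omega)]
    ring
  · rw [Finset.sum_congr rfl (g := fun j : Fin (2 * N) =>
        (if (j : ℕ) = i - 1 then -(1 / (2 * dx)) else 0) +
          (if (j : ℕ) = i then (1 + 2 * σ) / (2 * dx) else 0) +
          (if (j : ℕ) = i + 1 then (1 - 2 * σ) / (2 * dx) else 0) +
          (if (j : ℕ) = i + 2 then -(1 / (2 * dx)) else 0))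
      fun j _ => by unfold iipg1D; split_ifs <;> first | ring1 | omega]
    simp only [Finset.sum_add_distrib]
    rw [Fin.sum_ite_val_eq (by omega), Fin.sum_ite_val_eq (by omega),
      Fin.sum_ite_val_eq (by omega), Fin.sum_ite_val_eq (by omega)]
    ring

theorem iipg1D_system_monotone_general (N : ℕ) (dx σ dt : ℝ)
    (hdx : 0 < dx) (hσ : 1 / 2 < σ) (hdt : 0 < dt)
    (AM : Matrix (Fin (2 * N)) (Fin (2 * N)) ℝ)
    (hMdiag : ∀ i j, i ≠ j → AM i j = 0) (hMpos : ∀ i, 0 < AM i i) :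
    IsUnit (AM + dt • iipg1D N dx σ) ∧
    ∀ i j, 0 ≤ (AM + dt • iipg1D N dx σ)⁻¹ i j := by
  refine Matrix.isUnit_and_inv_nonneg_of_offDiag_nonpos (fun i j hij => ?_) (fun i => ?_)
  · simpa [hMdiag i j hij] using
      mul_nonpos_of_nonneg_of_nonpos hdt.le (iipg1D_apply_nonpos_of_ne hdx hσ hij)
  · have hAM : ∑ j, AM i j = AM i i :=
      Finset.sum_eq_single i (fun j _ hji => hMdiag i j hji.symm) (by simp)
    simpa [Finset.sum_add_distrib, ← Finset.mul_sum, iipg1D_row_sum_eq_zero, hAM] using hMpos i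

theorem iipg1D_system_monotone (N : ℕ) (hN : 1 ≤ N) (dx σ dt : ℝ)
    (hdx : 0 < dx) (hσ : 1 / 2 < σ) (hdt : 0 < dt)
    (AM : Matrix (Fin (2 * N)) (Fin (2 * N)) ℝ)
    (hMdiag : ∀ i j, i ≠ j → AM i j = 0) (hMpos : ∀ i, 0 < AM i i) :
    IsUnit (AM + dt • iipg1D N dx σ) ∧
    ∀ i j, 0 ≤ (AM + dt • iipg1D N dx σ)⁻¹ i j :=
  iipg1D_system_monotone_general N dx σ dt hdx hσ hdt AM hMdiag hMpos
end
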